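/- arXiv:0802.2993 — 3 statements merged into one kernel-verified Lean document; each statement's English description precedes it below -/
import Mathlib

section
/- Let A be a continuous inverse algebra (a unital locally convex topological algebra whose unit group A^× is open and on which inversion is continuous), and let p ∈ A be an idempotent. Then the corner algebra pAp, with unit p, is itself a continuous inverse algebra: its unit group (pAp)^× = pAp ∩ (A^× − (1 − p)) is open in pAp and inversion on it is continuous. -/
/-!
For `x, y ∈ pAp` one has `(x + (1 - p)) * (y + (1 - p)) = x * y + (1 - p)`, so the affine map
`x ↦ x + (1 - p)` sends an inverse pair of `pAp` to an inverse pair of `A`; conversely, if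
`u = x + (1 - p)` is a unit of `A`, then `x = p * u = u * p` and `p * u⁻¹ * p` inverts `x` in
`pAp`. Hence `(pAp)^×` is the preimage of `A^×` under this continuous map, and openness and
continuity of inversion pull back along it.
-/

namespace IsIdempotentElem

variable {R : Type*} [Ring R] {p : R}

lemma mul_eq_and_mul_eq_of_mul_mul_eq (hp : IsIdempotentElem p) {x : R}
    (hx : p * x * p = x) : p * x = x ∧ x * p = x :=
  (Subsemigroup.mem_corner_iff hp).mp ⟨x, hx⟩

lemma add_one_sub_mul_add_one_sub (hp : IsIdempotentElem p) {x y : R}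
    (hx : p * x * p = x) (hy : p * y * p = y) :
    (x + (1 - p)) * (y + (1 - p)) = x * y + (1 - p) := by
  obtain ⟨-, hxp⟩ := hp.mul_eq_and_mul_eq_of_mul_mul_eq hx
  obtain ⟨hpy, -⟩ := hp.mul_eq_and_mul_eq_of_mul_mul_eq hy
  have hx0 : x * (1 - p) = 0 := by rw [mul_sub, mul_one, hxp, sub_self]
  have h0y : (1 - p) * y = 0 := by rw [sub_mul, one_mul, hpy, sub_self]
  rw [add_mul, mul_add, mul_add, hx0, h0y, hp.one_sub.eq, add_zero, zero_add]

lemma exists_corner_inverse_iff_isUnit_add_one_sub (hp : IsIdempotentElem p) {x : R}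
    (hx : p * x * p = x) :
    (∃ y, p * y * p = y ∧ x * y = p ∧ y * x = p) ↔ IsUnit (x + (1 - p)) := by
  constructor
  · rintro ⟨y, hy, hxy, hyx⟩
    refine ⟨⟨x + (1 - p), y + (1 - p), ?_, ?_⟩, rfl⟩
    · rw [hp.add_one_sub_mul_add_one_sub hx hy, hxy, add_sub_cancel]
    · rw [hp.add_one_sub_mul_add_one_sub hy hx, hyx, add_sub_cancel]
  · rintro ⟨u, hu⟩
    obtain ⟨hpx, hxp⟩ := hp.mul_eq_and_mul_eq_of_mul_mul_eq hx
    have hpu : p * u = x := by rw [hu, mul_add, hpx, hp.mul_one_sub_self, add_zero]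
    have hup : u * p = x := by rw [hu, add_mul, hxp, hp.one_sub_mul_self, add_zero]
    have hy : p * (p * u⁻¹ * p) * p = p * u⁻¹ * p := by
      simp only [← mul_assoc, hp.eq]
      rw [mul_assoc _ p p, hp.eq]
    refine ⟨p * u⁻¹ * p, hy, ?_, ?_⟩
    · rw [← mul_assoc, ← mul_assoc, hxp, ← hpu, mul_assoc p, Units.mul_inv, mul_one, hp.eq]
    · rw [mul_assoc, hpx, ← hup, ← mul_assoc, mul_assoc p, Units.inv_mul, mul_one, hp.eq]

end IsIdempotentElem

theorem corner_of_cia_is_cia_general {A : Type*} [Ring A] [TopologicalSpace A]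
    [IsTopologicalRing A]
    (hopen : IsOpen {a : A | IsUnit a})
    (hinv : ContinuousOn Ring.inverse {a : A | IsUnit a})
    (p : A) (hp : p * p = p) :
    {a : {x : A // p * x * p = x} | ∃ b : {x : A // p * x * p = x},
        (a : A) * (b : A) = p ∧ (b : A) * (a : A) = p}
      = {a : {x : A // p * x * p = x} | IsUnit ((a : A) + (1 - p))} ∧
    IsOpen {a : {x : A // p * x * p = x} | ∃ b : {x : A // p * x * p = x},
        (a : A) * (b : A) = p ∧ (b : A) * (a : A) = p} ∧
    ContinuousOn (fun a : {x : A // p * x * p = x} =>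
        p * Ring.inverse ((a : A) + (1 - p)) * p)
      {a : {x : A // p * x * p = x} | ∃ b : {x : A // p * x * p = x},
        (a : A) * (b : A) = p ∧ (b : A) * (a : A) = p} := by
  have hunits : {a : {x : A // p * x * p = x} | ∃ b : {x : A // p * x * p = x},
      (a : A) * (b : A) = p ∧ (b : A) * (a : A) = p}
        = {a : {x : A // p * x * p = x} | IsUnit ((a : A) + (1 - p))} := by
    ext a
    simpa only [Set.mem_ofPred_eq, Subtype.exists, exists_prop] using
      IsIdempotentElem.exists_corner_inverse_iff_isUnit_add_one_sub hp a.2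
  have hshift : Continuous fun a : {x : A // p * x * p = x} => (a : A) + (1 - p) := by
    fun_prop
  refine ⟨hunits, ?_, ?_⟩
  · rw [hunits]
    exact hopen.preimage hshift
  · rw [hunits]
    exact (continuousOn_const.mul (hinv.comp hshift.continuousOn fun _ ha => ha)).mul
      continuousOn_const

/-- If `A` is a continuous inverse algebra (a unital locally convex topological
algebra with open unit group and continuous inversion) and `p` is an idempotent,
then the corner algebra `pAp` (with unit `p`, subspace topology) is again a
continuous inverse algebra: its unit group equals `pAp ∩ (A^× - (1-p))`, is open
in `pAp`, and inversion `a ↦ p * (a + 1 - p)⁻¹ * p` is continuous on it. -/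
theorem corner_of_cia_is_cia {A : Type*} [Ring A] [TopologicalSpace A]
    [IsTopologicalRing A] [Module ℝ A] [ContinuousSMul ℝ A] [LocallyConvexSpace ℝ A]
    (hopen : IsOpen {a : A | IsUnit a})
    (hinv : ContinuousOn Ring.inverse {a : A | IsUnit a})
    (p : A) (hp : p * p = p) :
    {a : {x : A // p * x * p = x} | ∃ b : {x : A // p * x * p = x},
        (a : A) * (b : A) = p ∧ (b : A) * (a : A) = p}
      = {a : {x : A // p * x * p = x} | IsUnit ((a : A) + (1 - p))} ∧
    IsOpen {a : {x : A // p * x * p = x} | ∃ b : {x : A // p * x * p = x},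
        (a : A) * (b : A) = p ∧ (b : A) * (a : A) = p} ∧
    ContinuousOn (fun a : {x : A // p * x * p = x} =>
        p * Ring.inverse ((a : A) + (1 - p)) * p)
      {a : {x : A // p * x * p = x} | ∃ b : {x : A // p * x * p = x},
        (a : A) * (b : A) = p ∧ (b : A) * (a : A) = p} :=
  corner_of_cia_is_cia_general hopen hinv p hp
end

section
/- Let A be a continuous inverse algebra and p an idempotent in A. Then the set U_p = {q ∈ Idem(A) : pq + (1−p)(1−q) ∈ A^×} is an open neighborhood of p in the set Idem(A) of idempotents (with the subspace topology), and every q ∈ U_p is conjugate to p by a unit of A. -/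
namespace IsIdempotentElem

variable {R : Type*} [Ring R] {p q : R}

theorem mul_add_one_sub_mul_one_sub_self (hp : IsIdempotentElem p) :
    p * p + (1 - p) * (1 - p) = 1 := by
  rw [hp.eq, hp.one_sub.eq, add_sub_cancel]

/-- Both sides equal `p * q`: the cross terms die by `(1 - q) * q = 0` and `p * (1 - p) = 0`. -/
theorem mul_add_one_sub_mul_one_sub_mul (hp : IsIdempotentElem p) (hq : IsIdempotentElem q) :
    (p * q + (1 - p) * (1 - q)) * q = p * (p * q + (1 - p) * (1 - q)) := by
  have hq0 : (1 - q) * q = 0 := by rw [sub_mul, one_mul, hq.eq, sub_self]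
  have hp0 : p * (1 - p) = 0 := by rw [mul_sub, mul_one, hp.eq, sub_self]
  rw [add_mul, mul_add, mul_assoc, hq.eq, mul_assoc, hq0, ← mul_assoc p p, hp.eq,
    ← mul_assoc p, hp0, mul_zero, zero_mul]

end IsIdempotentElem

theorem IsUnit.exists_units_conj_eq_of_mul_eq {M : Type*} [Monoid M] {u a b : M}
    (hu : IsUnit u) (h : u * a = b * u) : ∃ g : Mˣ, g.val * a * g.inv = b := by
  obtain ⟨g, rfl⟩ := hu
  exact ⟨g, by rw [h, mul_assoc, g.val_inv, mul_one]⟩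

theorem isOpen_setOf_isUnit_mul_add_one_sub_mul_one_sub {A : Type*} [Ring A]
    [TopologicalSpace A] [IsTopologicalRing A] (hopen : IsOpen {a : A | IsUnit a}) (p : A) :
    IsOpen {q : {x : A // x * x = x} | IsUnit (p * q + (1 - p) * (1 - (q : A)))} :=
  hopen.preimage (by fun_prop)

theorem idem_nbhd_conjugate_general {A : Type*} [Ring A] [TopologicalSpace A]
    [IsTopologicalRing A]
    (hopen : IsOpen {a : A | IsUnit a})
    (p : {x : A // x * x = x}) :
    (p : A) * p + (1 - (p : A)) * (1 - (p : A)) ∈ {a : A | IsUnit a} ∧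
    IsOpen {q : {x : A // x * x = x} |
      IsUnit ((p : A) * q + (1 - (p : A)) * (1 - (q : A)))} ∧
    ∀ q : {x : A // x * x = x},
      IsUnit ((p : A) * q + (1 - (p : A)) * (1 - (q : A))) →
      ∃ g : Aˣ, g.val * (q : A) * g.inv = (p : A) := by
  have hp : IsIdempotentElem (p : A) := p.2
  refine ⟨?_, isOpen_setOf_isUnit_mul_add_one_sub_mul_one_sub hopen p, fun q hu => ?_⟩
  · rw [Set.mem_ofPred_eq, hp.mul_add_one_sub_mul_one_sub_self]
    exact isUnit_one
  · exact hu.exists_units_conj_eq_of_mul_eq (hp.mul_add_one_sub_mul_one_sub_mul q.2)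

/-- In a continuous inverse algebra `A`, for an idempotent `p` the set
`U_p = {q ∈ Idem(A) : p*q + (1-p)*(1-q) ∈ A^×}` is an open neighborhood of `p`
in `Idem(A)` (with the subspace topology), and every `q ∈ U_p` is conjugate to
`p` by a unit of `A`. -/
theorem idem_nbhd_conjugate {A : Type*} [Ring A] [TopologicalSpace A]
    [IsTopologicalRing A] [Module ℝ A] [ContinuousSMul ℝ A] [LocallyConvexSpace ℝ A]
    (hopen : IsOpen {a : A | IsUnit a})
    (hinv : ContinuousOn Ring.inverse {a : A | IsUnit a})
    (p : {x : A // x * x = x}) :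
    (p : A) * p + (1 - (p : A)) * (1 - (p : A)) ∈ {a : A | IsUnit a} ∧
    IsOpen {q : {x : A // x * x = x} |
      IsUnit ((p : A) * q + (1 - (p : A)) * (1 - (q : A)))} ∧
    ∀ q : {x : A // x * x = x},
      IsUnit ((p : A) * q + (1 - (p : A)) * (1 - (q : A))) →
      ∃ g : Aˣ, g.val * (q : A) * g.inv = (p : A) :=
  idem_nbhd_conjugate_general hopen p
end

section
/- Let A be a continuous inverse algebra and p an idempotent of A. Then the connected component of p in Idem(A) coincides with the orbit of p under the conjugation action of the identity component A^×₀ of the unit group, i.e. {g p g⁻¹ : g ∈ A^×₀}. -/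
/-!
Orbits of `A^×₀` on `Idem(A)` are open: for idempotents `p, q` the element
`u = q p + (1 - q)(1 - p)` satisfies `u p = q u` and equals `1` at `q = p`. So for `q` near `p`
it lies in a star-shaped neighbourhood of `1` made of units, hence in `A^×₀`, and conjugates `p`
to `q`. Open orbits are clopen, and an orbit of a connected group is connected, so the orbits are
exactly the connected components.
-/

open Set Filter Topology MulAction

theorem MulAction.connectedComponent_eq_orbit {G X : Type*} [Group G] [TopologicalSpace G]
    [PreconnectedSpace G] [MulAction G X] [TopologicalSpace X]
    (hcont : ∀ x : X, Continuous fun g : G => g • x) (hnhds : ∀ x : X, orbit G x ∈ 𝓝 x)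
    (x : X) : connectedComponent x = orbit G x := by
  have hopen : IsOpen (orbit G x) :=
    isOpen_iff_mem_nhds.mpr fun y hy => orbit_eq_iff.mpr hy ▸ hnhds y
  have hclosed : IsClosed (orbit G x) := by
    refine isOpen_compl_iff.mp (isOpen_iff_mem_nhds.mpr fun y hy => ?_)
    refine mem_of_superset (hnhds y) fun z hzy hzx => hy ?_
    rw [← orbit_eq_iff.mpr hzx, orbit_eq_iff.mpr hzy]
    exact mem_orbit_self y
  refine Subset.antisymm (IsClopen.connectedComponent_subset ⟨hclosed, hopen⟩
    (mem_orbit_self x)) ?_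
  exact (isPreconnected_range (hcont x)).subset_connectedComponent (mem_orbit_self x)

instance Subgroup.connectedComponentOfOne.preconnectedSpace (G : Type*) [TopologicalSpace G]
    [Group G] [IsTopologicalGroup G] : PreconnectedSpace (Subgroup.connectedComponentOfOne G) :=
  Subtype.preconnectedSpace isPreconnected_connectedComponent

theorem exists_starConvex_mem_nhds_subset {E : Type*} [AddCommGroup E] [Module ℝ E]
    [TopologicalSpace E] [IsTopologicalAddGroup E] [ContinuousSMul ℝ E] {x : E} {U : Set E}
    (hU : U ∈ 𝓝 x) : ∃ S ∈ 𝓝 x, StarConvex ℝ x S ∧ S ⊆ U := by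
  have hU0 : (x + ·) ⁻¹' U ∈ 𝓝 (0 : E) :=
    (continuous_const_add x).continuousAt.preimage_mem_nhds (by rwa [add_zero])
  obtain ⟨B, ⟨hB, hBbal⟩, hBU⟩ := (nhds_basis_balanced ℝ E).mem_iff.mp hU0
  refine ⟨(· - x) ⁻¹' B, (continuous_sub_right x).continuousAt.preimage_mem_nhds
    (by rwa [sub_self]), fun y hy a b ha hb hab => ?_, fun y hy => by simpa using hBU hy⟩
  obtain rfl : a = 1 - b := by linarith
  have hshift : (1 - b) • x + b • y - x = (1 - b) • (0 : E) + b • (y - x) := by module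
  simpa only [mem_preimage, hshift] using hBbal.starConvex hy ha hb hab

section IdempotentOrbits

variable {A : Type*} [Ring A]

def idemIntertwiner (p q : A) : A := q * p + (1 - q) * (1 - p)

theorem idemIntertwiner_mul {p q : A} (hp : IsIdempotentElem p) (hq : IsIdempotentElem q) :
    idemIntertwiner p q * p = q * idemIntertwiner p q := by
  simp only [idemIntertwiner, add_mul, mul_add, sub_mul, mul_sub, one_mul, mul_one, mul_assoc,
    hp.eq, ← mul_assoc q q, hq.eq]
  abel

theorem idemIntertwiner_self {p : A} (hp : IsIdempotentElem p) : idemIntertwiner p p = 1 := by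
  simp only [idemIntertwiner, sub_mul, mul_sub, one_mul, mul_one, hp.eq]
  abel

instance Units.mulActionIdem : MulAction Aˣ {x : A // x * x = x} where
  smul g p := ⟨g * p * ↑g⁻¹, by
    simp only [mul_assoc, Units.inv_mul_cancel_left]; rw [← mul_assoc (p : A), p.2]⟩
  one_smul p := Subtype.ext <| show (1 : Aˣ) * (p : A) * ↑(1 : Aˣ)⁻¹ = p by simp
  mul_smul g h p := Subtype.ext <|
    show ↑(g * h) * (p : A) * ↑(g * h)⁻¹ = g * (h * p * ↑h⁻¹) * ↑g⁻¹ by simp [mul_assoc]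

variable [TopologicalSpace A] [IsTopologicalRing A]

theorem Units.continuous_smul_idem (p : {x : A // x * x = x}) :
    Continuous fun g : Aˣ => g • p :=
  Continuous.subtype_mk (by fun_prop) _

variable [Module ℝ A] [ContinuousSMul ℝ A]

theorem Units.val_image_connectedComponent_one_mem_nhds (hopen : IsOpen {a : A | IsUnit a})
    (hinv : ContinuousOn Ring.inverse {a : A | IsUnit a}) :
    Units.val '' connectedComponent (1 : Aˣ) ∈ 𝓝 (1 : A) := by
  obtain ⟨S, hS, hSstar, hSunit⟩ :=
    exists_starConvex_mem_nhds_subset (hopen.mem_nhds isUnit_one)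
  have hemb : IsEmbedding (Units.val : Aˣ → A) :=
    Units.isEmbedding_val_mk' hinv Ring.inverse_unit
  have himage : Units.val '' (Units.val ⁻¹' S) = S :=
    image_preimage_eq_of_subset fun a ha => hSunit ha
  have hpre : IsPreconnected (Units.val ⁻¹' S : Set Aˣ) := by
    rw [← hemb.isInducing.isPreconnected_image, himage]
    exact (hSstar.isPathConnected (mem_of_mem_nhds hS)).isConnected.isPreconnected
  refine mem_of_superset hS ?_
  rw [← himage]
  exact image_mono (hpre.subset_connectedComponent (mem_of_mem_nhds hS : ((1 : Aˣ) : A) ∈ S))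

theorem orbit_connectedComponentOfOne_idem_mem_nhds (hopen : IsOpen {a : A | IsUnit a})
    (hinv : ContinuousOn Ring.inverse {a : A | IsUnit a}) (r : {x : A // x * x = x}) :
    orbit (Subgroup.connectedComponentOfOne Aˣ) r ∈ 𝓝 r := by
  have hlim : Tendsto (fun q : {x : A // x * x = x} => idemIntertwiner (r : A) q) (𝓝 r) (𝓝 1) := by
    rw [← idemIntertwiner_self r.2]
    exact (show Continuous _ by unfold idemIntertwiner; fun_prop).tendsto r
  filter_upwards [hlim (Units.val_image_connectedComponent_one_mem_nhds hopen hinv)]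
    with q ⟨u, hu, huq⟩
  refine ⟨⟨u, hu⟩, Subtype.ext ?_⟩
  change (u : A) * r * ↑u⁻¹ = q
  rw [Units.mul_inv_eq_iff_eq_mul, huq, idemIntertwiner_mul r.2 q.2]

end IdempotentOrbits

theorem connectedComponent_idem_eq_orbit_general {A : Type*} [Ring A] [TopologicalSpace A]
    [IsTopologicalRing A] [Module ℝ A] [ContinuousSMul ℝ A]
    (hopen : IsOpen {a : A | IsUnit a})
    (hinv : ContinuousOn Ring.inverse {a : A | IsUnit a})
    (p : {x : A // x * x = x}) :
    connectedComponent p =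
      {q : {x : A // x * x = x} |
        ∃ g : Aˣ, g ∈ connectedComponent (1 : Aˣ) ∧
          g.val * (p : A) * g.inv = (q : A)} := by
  rw [MulAction.connectedComponent_eq_orbit (G := Subgroup.connectedComponentOfOne Aˣ)
    (fun q => (Units.continuous_smul_idem q).comp continuous_subtype_val)
    (orbit_connectedComponentOfOne_idem_mem_nhds hopen hinv) p]
  ext q
  exact ⟨fun ⟨g, hg⟩ => ⟨g, g.2, congrArg Subtype.val hg⟩,
    fun ⟨g, hg, hgq⟩ => ⟨⟨g, hg⟩, Subtype.ext hgq⟩⟩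

/-- In a continuous inverse algebra `A`, the connected component of an
idempotent `p` in `Idem(A)` (with the subspace topology) is exactly the orbit
of `p` under conjugation by the identity component `A^×₀` of the unit group. -/
theorem connectedComponent_idem_eq_orbit {A : Type*} [Ring A] [TopologicalSpace A]
    [IsTopologicalRing A] [Module ℝ A] [ContinuousSMul ℝ A] [LocallyConvexSpace ℝ A]
    (hopen : IsOpen {a : A | IsUnit a})
    (hinv : ContinuousOn Ring.inverse {a : A | IsUnit a})
    (p : {x : A // x * x = x}) :
    connectedComponent p =
      {q : {x : A // x * x = x} |
        ∃ g : Aˣ, g ∈ connectedComponent (1 : Aˣ) ∧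
          g.val * (p : A) * g.inv = (q : A)} :=
  connectedComponent_idem_eq_orbit_general hopen hinv p
end
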